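/- Let n ≥ 1 and let f : [0,1] → ℝ be continuous and convex. Then for all x, y ∈ [0,1], ∑_{i=0}^{n} ∑_{j=0}^{n} [p_{n,i}(x)p_{n,j}(x) + p_{n,i}(y)p_{n,j}(y) − 2 p_{n,i}(x)p_{n,j}(y)]·f((i+j)/(2n)) ≥ 0. -/

import Mathlib

/-- Bernstein basis polynomial `p_{n,ν}(t) = C(n,ν) t^ν (1-t)^{n-ν}`. -/
noncomputable def bp (n ν : ℕ) (t : ℝ) : ℝ := (n.choose ν : ℝ) * t ^ ν * (1 - t) ^ (n - ν)

/-- Bernstein-type sum -/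
noncomputable def Bb (a : ℕ) (x : ℝ) (h : ℕ → ℝ) : ℝ :=
  ∑ i ∈ Finset.range (a + 1), bp a i x * h i

noncomputable def Q (a b : ℕ) (x y : ℝ) (g : ℕ → ℝ) : ℝ :=
  Bb a x (fun i => Bb b y (fun j => g (i + j)))

lemma bp_nonneg {t : ℝ} (ht : t ∈ Set.Icc (0:ℝ) 1) (n ν : ℕ) : 0 ≤ bp n ν t := by
  obtain ⟨h0, h1⟩ := ht
  unfold bp
  have : (0:ℝ) ≤ 1 - t := by linarith
  positivity

lemma bp_top (a : ℕ) (x : ℝ) : bp a (a+1) x = 0 := by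
  simp [bp, Nat.choose_eq_zero_of_lt (by omega : a < a+1)]

lemma bp_zero_succ (a : ℕ) (x : ℝ) : bp (a+1) 0 x = (1-x) * bp a 0 x := by
  simp [bp, pow_succ]
  ring

lemma bp_succ_succ (a i : ℕ) (x : ℝ) :
    bp (a+1) (i+1) x = (1-x) * bp a (i+1) x + x * bp a i x := by
  rcases le_or_gt (i+1) a with h | h
  · unfold bp
    have e1 : a + 1 - (i+1) = (a - (i+1)) + 1 := by omega
    have e2 : a - i = (a - (i+1)) + 1 := by omega
    rw [Nat.choose_succ_succ a i, e1, e2]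
    push_cast
    ring
  · rcases Nat.eq_or_lt_of_le h with h' | h'
    · have h'' : i = a := by omega
      subst h''
      unfold bp
      simp [Nat.choose_eq_zero_of_lt (by omega : i < i+1), Nat.choose_self, pow_succ]
      ring
    · unfold bp
      rw [Nat.choose_eq_zero_of_lt (by omega : a+1 < i+1),
        Nat.choose_eq_zero_of_lt (by omega : a < i+1),
        Nat.choose_eq_zero_of_lt (by omega : a < i)]
      simp

lemma Bb_zero (x : ℝ) (h : ℕ → ℝ) : Bb 0 x h = h 0 := by
  simp [Bb, bp]

lemma Bb_succ (a : ℕ) (x : ℝ) (h : ℕ → ℝ) :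
    Bb (a+1) x h = (1-x) * Bb a x h + x * Bb a x (fun i => h (i+1)) := by
  unfold Bb
  rw [Finset.sum_range_succ' (fun i => bp (a+1) i x * h i) (a+1)]
  have : ∀ i ∈ Finset.range (a+1), bp (a+1) (i+1) x * h (i+1)
      = (1-x) * (bp a (i+1) x * h (i+1)) + x * (bp a i x * h (i+1)) := by
    intro i _
    rw [bp_succ_succ]; ring
  rw [Finset.sum_congr rfl this, Finset.sum_add_distrib, ← Finset.mul_sum, ← Finset.mul_sum,
    bp_zero_succ]
  have e : ∑ i ∈ Finset.range (a+1), bp a i x * h i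
      = (∑ i ∈ Finset.range (a+1), bp a (i+1) x * h (i+1)) + bp a 0 x * h 0 := by
    have h2 := Finset.sum_range_succ' (fun i => bp a i x * h i) (a+1)
    rw [Finset.sum_range_succ (fun i => bp a i x * h i) (a+1), bp_top] at h2
    simpa using h2
  simp only []
  rw [e]; ring

lemma Bb_nonneg {x : ℝ} (hx : x ∈ Set.Icc (0:ℝ) 1) (a : ℕ) {h : ℕ → ℝ}
    (hh : ∀ i, 0 ≤ h i) : 0 ≤ Bb a x h := by
  apply Finset.sum_nonneg
  intro i _
  exact mul_nonneg (bp_nonneg hx a i) (hh i)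

lemma Bb_add (a : ℕ) (x : ℝ) (h1 h2 : ℕ → ℝ) :
    Bb a x (fun i => h1 i + h2 i) = Bb a x h1 + Bb a x h2 := by
  simp [Bb, mul_add, Finset.sum_add_distrib]

lemma Bb_smul (a : ℕ) (x c : ℝ) (h : ℕ → ℝ) :
    Bb a x (fun i => c * h i) = c * Bb a x h := by
  simp [Bb, Finset.mul_sum]; congr 1; funext i; ring

lemma Bb_congr (a : ℕ) (x : ℝ) {h1 h2 : ℕ → ℝ} (e : ∀ i, h1 i = h2 i) :
    Bb a x h1 = Bb a x h2 := by
  unfold Bb; exact Finset.sum_congr rfl (fun i _ => by rw [e i])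

lemma Bb_comb (a : ℕ) (x : ℝ) (h1 h2 h3 : ℕ → ℝ) :
    Bb a x h1 - 2 * Bb a x h2 + Bb a x h3 = Bb a x (fun i => h1 i - 2 * h2 i + h3 i) := by
  unfold Bb
  rw [Finset.mul_sum, ← Finset.sum_sub_distrib, ← Finset.sum_add_distrib]
  exact Finset.sum_congr rfl (fun i _ => by ring)

lemma Q_zero_left (b : ℕ) (x y : ℝ) (g : ℕ → ℝ) : Q 0 b x y g = Bb b y g := by
  unfold Q
  rw [Bb_zero]
  exact Bb_congr _ _ (fun j => by norm_num)

lemma Q_zero_right (a : ℕ) (x y : ℝ) (g : ℕ → ℝ) : Q a 0 x y g = Bb a x g := by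
  unfold Q
  exact Bb_congr _ _ (fun i => by rw [Bb_zero]; norm_num)

lemma Q_succ_left (a b : ℕ) (x y : ℝ) (g : ℕ → ℝ) :
    Q (a+1) b x y g = (1-x) * Q a b x y g + x * Q a b x y (fun k => g (k+1)) := by
  unfold Q
  rw [Bb_succ]
  congr 1
  congr 1
  apply Bb_congr
  intro i
  apply Bb_congr
  intro j
  congr 1
  omega

lemma Q_succ_right (a b : ℕ) (x y : ℝ) (g : ℕ → ℝ) :
    Q a (b+1) x y g = (1-y) * Q a b x y g + y * Q a b x y (fun k => g (k+1)) := by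
  unfold Q
  rw [← Bb_smul, ← Bb_smul, ← Bb_add]
  apply Bb_congr
  intro i
  rw [Bb_succ]
  congr 1

lemma Q_sub2_nonneg {x y : ℝ} (hx : x ∈ Set.Icc (0:ℝ) 1) (hy : y ∈ Set.Icc (0:ℝ) 1)
    (a b : ℕ) {g : ℕ → ℝ} (hg : ∀ k, 2 * g (k+1) ≤ g k + g (k+2)) :
    0 ≤ Q a b x y g - 2 * Q a b x y (fun k => g (k+1)) + Q a b x y (fun k => g (k+2)) := by
  have key : Q a b x y g - 2 * Q a b x y (fun k => g (k+1)) + Q a b x y (fun k => g (k+2))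
      = Bb a x (fun i => Bb b y (fun j => g (i+j) - 2 * g (i+j+1) + g (i+j+2))) := by
    unfold Q
    simp only [Bb_comb]
  rw [key]
  apply Bb_nonneg hx
  intro i
  apply Bb_nonneg hy
  intro j
  have := hg (i+j)
  linarith

lemma Q_congr (a b : ℕ) (x y : ℝ) {g1 g2 : ℕ → ℝ} (e : ∀ k, g1 k = g2 k) :
    Q a b x y g1 = Q a b x y g2 := by
  unfold Q
  exact Bb_congr _ _ (fun i => Bb_congr _ _ (fun j => e (i+j)))

lemma Q_diag (x : ℝ) : ∀ (a b : ℕ) (g : ℕ → ℝ), Q a b x x g = Bb (a+b) x g := by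
  intro a
  induction a with
  | zero => intro b g; rw [Q_zero_left]; norm_num
  | succ a ih =>
    intro b g
    rw [Q_succ_left, ih, ih, show a+1+b = (a+b)+1 from by omega, Bb_succ]

lemma Q_succ_succ (a b : ℕ) (x y : ℝ) (g : ℕ → ℝ) :
    Q (a+1) (b+1) x y g = (1-x)*(1-y) * Q a b x y g
      + ((1-x)*y + x*(1-y)) * Q a b x y (fun k => g (k+1))
      + x*y * Q a b x y (fun k => g (k+2)) := by
  rw [Q_succ_left, Q_succ_right, Q_succ_right]
  have e : Q a b x y (fun k => (fun k => g (k+1)) (k+1)) = Q a b x y (fun k => g (k+2)) :=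
    Q_congr _ _ _ _ (fun k => rfl)
  rw [e]
  ring

lemma Q_succ2_left (a b : ℕ) (x y : ℝ) (g : ℕ → ℝ) :
    Q (a+2) b x y g = (1-x)^2 * Q a b x y g
      + (2*x*(1-x)) * Q a b x y (fun k => g (k+1))
      + x^2 * Q a b x y (fun k => g (k+2)) := by
  rw [show a+2 = (a+1)+1 from rfl, Q_succ_left, Q_succ_left, Q_succ_left]
  have e : Q a b x y (fun k => (fun k => g (k+1)) (k+1)) = Q a b x y (fun k => g (k+2)) :=
    Q_congr _ _ _ _ (fun k => rfl)
  rw [e]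
  ring

lemma Q_succ2_right (a b : ℕ) (x y : ℝ) (g : ℕ → ℝ) :
    Q a (b+2) x y g = (1-y)^2 * Q a b x y g
      + (2*y*(1-y)) * Q a b x y (fun k => g (k+1))
      + y^2 * Q a b x y (fun k => g (k+2)) := by
  rw [show b+2 = (b+1)+1 from rfl, Q_succ_right, Q_succ_right, Q_succ_right]
  have e : Q a b x y (fun k => (fun k => g (k+1)) (k+1)) = Q a b x y (fun k => g (k+2)) :=
    Q_congr _ _ _ _ (fun k => rfl)
  rw [e]
  ring

lemma Bb_succ_succ (N : ℕ) (u : ℝ) (g : ℕ → ℝ) :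
    Bb (N+2) u g = (1-u)^2 * Bb N u g + 2*u*(1-u) * Bb N u (fun k => g (k+1))
      + u^2 * Bb N u (fun k => g (k+2)) := by
  rw [show N+2 = (N+1)+1 from rfl, Bb_succ, Bb_succ, Bb_succ]
  have e : Bb N u (fun k => (fun k => g (k+1)) (k+1)) = Bb N u (fun k => g (k+2)) :=
    Bb_congr _ _ (fun k => rfl)
  rw [e]
  ring

/-- Hoeffding-type swap inequality. -/
lemma Q_le_Bb {x y : ℝ} (hx : x ∈ Set.Icc (0:ℝ) 1) (hy : y ∈ Set.Icc (0:ℝ) 1) :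
    ∀ (a : ℕ) (g : ℕ → ℝ), (∀ k, 2 * g (k+1) ≤ g k + g (k+2)) →
    Q a a x y g ≤ Bb (2*a) ((x+y)/2) g := by
  obtain ⟨hx0, hx1⟩ := hx
  obtain ⟨hy0, hy1⟩ := hy
  have hm0 : (0:ℝ) ≤ (x+y)/2 := by linarith
  have hm1 : (x+y)/2 ≤ 1 := by linarith
  intro a
  induction a with
  | zero =>
    intro g hg
    simp [Q_zero_left, Bb_zero]
  | succ a ih =>
    intro g hg
    have hg1 : ∀ k, 2 * g (k+1+1) ≤ g (k+1) + g (k+1+2) := fun k => hg (k+1)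
    have hg2 : ∀ k, 2 * g (k+2+1) ≤ g (k+2) + g (k+2+2) := fun k => hg (k+2)
    have hA := Q_sub2_nonneg ⟨hx0, hx1⟩ ⟨hy0, hy1⟩ a a hg
    have h0 := ih g hg
    have h1 := ih (fun k => g (k+1)) hg1
    have h2 := ih (fun k => g (k+2)) hg2
    rw [Q_succ_succ]
    rw [show 2*(a+1) = 2*a+2 from by omega, Bb_succ_succ]
    have swap : (1-x)*(1-y) * Q a a x y g
        + ((1-x)*y + x*(1-y)) * Q a a x y (fun k => g (k+1))
        + x*y * Q a a x y (fun k => g (k+2))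
        ≤ (1-(x+y)/2)^2 * Q a a x y g
        + 2*((x+y)/2)*(1-(x+y)/2) * Q a a x y (fun k => g (k+1))
        + ((x+y)/2)^2 * Q a a x y (fun k => g (k+2)) := by
      nlinarith [sq_nonneg (x-y), hA]
    refine swap.trans ?_
    have c0 : (0:ℝ) ≤ (1-(x+y)/2)^2 := sq_nonneg _
    have c1 : (0:ℝ) ≤ 2*((x+y)/2)*(1-(x+y)/2) := by nlinarith
    have c2 : (0:ℝ) ≤ ((x+y)/2)^2 := sq_nonneg _
    have := add_le_add (add_le_add (mul_le_mul_of_nonneg_left h0 c0)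
      (mul_le_mul_of_nonneg_left h1 c1)) (mul_le_mul_of_nonneg_left h2 c2)
    linarith

lemma sum_mul_choose (N : ℕ) (hN : 1 ≤ N) :
    ∑ a ∈ Finset.range (N+1), (a : ℝ) * (N.choose a : ℝ) = N * 2^(N-1) := by
  have hnat : ∑ a ∈ Finset.range (N+1), a * N.choose a = N * 2^(N-1) := by
    rw [Finset.sum_range_succ' (fun a => a * N.choose a) N]
    have e : ∀ a ∈ Finset.range N, (a+1) * N.choose (a+1) = N * (N-1).choose a := by
      intro a _
      have h := Nat.add_one_mul_choose_eq (N-1) a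
      rw [show N-1+1 = N from by omega] at h
      rw [mul_comm]
      exact h.symm
    rw [Finset.sum_congr rfl e, ← Finset.mul_sum]
    have e2 : ∑ a ∈ Finset.range N, (N-1).choose a = 2^(N-1) := by
      have h3 := Nat.sum_range_choose (N-1)
      rwa [show N-1+1 = N from by omega] at h3
    rw [e2]
    simp
  exact_mod_cast congrArg (fun t : ℕ => (t:ℝ)) hnat

lemma discrete_convex_bound (N : ℕ) (D : ℕ → ℝ)
    (hconv : ∀ a, a + 2 ≤ N → 2 * D (a+1) ≤ D a + D (a+2)) :
    ∀ a ≤ N, (N:ℝ) * D a ≤ ((N:ℝ) - a) * D 0 + a * D N := by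
  have smono : ∀ j, j + 1 ≤ N → ∀ i ≤ j, D (i+1) - D i ≤ D (j+1) - D j := by
    intro j
    induction j with
    | zero => intro _ i hi; interval_cases i; exact le_refl _
    | succ j ihj =>
      intro hj i hi
      rcases Nat.lt_or_ge i (j+1) with h | h
      · have h1 : D (i+1) - D i ≤ D (j+1) - D j := ihj (by omega) i (by omega)
        have h2 := hconv j (by omega)
        have : D (j+1+1) - D (j+1) ≥ D (j+1) - D j := by linarith
        linarith
      · have he : i = j+1 := by omega
        rw [he]
  intro a ha
  rcases Nat.eq_zero_or_pos a with rfl | hapos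
  · push_cast
    have : ((N:ℝ) - 0) * D 0 + 0 * D N = N * D 0 := by ring
    linarith [le_of_eq this.symm]
  rcases Nat.eq_or_lt_of_le ha with heq | haN
  · rw [heq]
    have : ((N:ℝ) - N) * D 0 + (N:ℝ) * D N = N * D N := by ring
    linarith [le_of_eq this.symm]
  -- 0 < a < N
  have tel1 : D a - D 0 = ∑ i ∈ Finset.range a, (D (i+1) - D i) :=
    (Finset.sum_range_sub (fun i => D i) a).symm
  have tel2 : D N - D a = ∑ i ∈ Finset.Ico a N, (D (i+1) - D i) := by
    rw [Finset.sum_Ico_eq_sub (fun i => D (i+1) - D i) (le_of_lt haN),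
      Finset.sum_range_sub (fun i => D i), Finset.sum_range_sub (fun i => D i)]
    ring
  have hub : ∑ i ∈ Finset.range a, (D (i+1) - D i) ≤ (a:ℝ) * (D (a+1) - D a) := by
    calc ∑ i ∈ Finset.range a, (D (i+1) - D i)
        ≤ ∑ _i ∈ Finset.range a, (D (a+1) - D a) :=
          Finset.sum_le_sum (fun i hi => smono a (by omega) i
            (by simp at hi; omega))
      _ = (a:ℝ) * (D (a+1) - D a) := by
          rw [Finset.sum_const, Finset.card_range]; simp
  have hlb : ((N - a : ℕ):ℝ) * (D (a+1) - D a) ≤ ∑ i ∈ Finset.Ico a N, (D (i+1) - D i) := by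
    calc ((N - a : ℕ):ℝ) * (D (a+1) - D a)
        = ∑ _i ∈ Finset.Ico a N, (D (a+1) - D a) := by
          rw [Finset.sum_const, Nat.card_Ico]; simp
      _ ≤ ∑ i ∈ Finset.Ico a N, (D (i+1) - D i) :=
          Finset.sum_le_sum (fun i hi => by
            rw [Finset.mem_Ico] at hi
            exact smono i (by omega) a (by omega))
  have hcast : ((N - a : ℕ):ℝ) = (N:ℝ) - a := by
    rw [Nat.cast_sub (le_of_lt haN)]
  rw [hcast] at hlb
  have h1 : ((N:ℝ) - a) * (D a - D 0) ≤ ((N:ℝ) - a) * ((a:ℝ) * (D (a+1) - D a)) := by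
    apply mul_le_mul_of_nonneg_left _ _
    · rw [tel1]; exact hub
    · have h4 : ((a:ℝ)) ≤ N := (Nat.cast_le (α := ℝ)).mpr (le_of_lt haN)
      linarith
  have h2 : (a:ℝ) * (((N:ℝ) - a) * (D (a+1) - D a)) ≤ (a:ℝ) * (D N - D a) := by
    apply mul_le_mul_of_nonneg_left _ _
    · rw [tel2]; exact hlb
    · positivity
  nlinarith [h1, h2]

lemma pascal_sum (F : ℕ → ℕ → ℝ) (N : ℕ) :
    ∑ a ∈ Finset.range (N+2), ((N+1).choose a : ℝ) * F a (N+1-a)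
      = (∑ a ∈ Finset.range (N+1), (N.choose a : ℝ) * F (a+1) (N-a))
        + ∑ a ∈ Finset.range (N+1), (N.choose a : ℝ) * F a (N-a+1) := by
  set G : ℕ → ℝ := fun a => (N.choose a : ℝ) * F a (N-a+1) with hG
  rw [Finset.sum_range_succ' (fun a => ((N+1).choose a : ℝ) * F a (N+1-a)) (N+1)]
  have e1 : ∀ a ∈ Finset.range (N+1), ((N+1).choose (a+1) : ℝ) * F (a+1) (N+1-(a+1))
      = (N.choose a : ℝ) * F (a+1) (N-a) + (N.choose (a+1) : ℝ) * F (a+1) (N-a) := by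
    intro a ha
    rw [show N+1-(a+1) = N-a from by omega, Nat.choose_succ_succ]
    push_cast
    ring
  rw [Finset.sum_congr rfl e1, Finset.sum_add_distrib]
  have e3 : ∀ a ∈ Finset.range (N+1), (N.choose (a+1):ℝ) * F (a+1) (N-a) = G (a+1) := by
    intro a ha
    simp only [hG]
    rcases Nat.lt_or_ge a N with h | h
    · rw [show N-(a+1)+1 = N-a from by omega]
    · have haN : a = N := by simp at ha; omega
      rw [haN, Nat.choose_eq_zero_of_lt (by omega : N < N+1)]
      norm_num
  have e4 : ((N+1).choose 0 : ℝ) * F 0 (N+1-0) = G 0 := by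
    simp only [hG]
    norm_num
  rw [Finset.sum_congr rfl e3, e4]
  have e5 : (∑ a ∈ Finset.range (N+1), G (a+1)) + G 0 = ∑ a ∈ Finset.range (N+2), G a :=
    (Finset.sum_range_succ' G (N+1)).symm
  have e6 : ∑ a ∈ Finset.range (N+2), G a = (∑ a ∈ Finset.range (N+1), G a) + G (N+1) :=
    Finset.sum_range_succ G (N+1)
  have e7 : G (N+1) = 0 := by
    simp only [hG]
    rw [Nat.choose_eq_zero_of_lt (by omega : N < N+1)]
    norm_num
  rw [add_assoc, e5, e6, e7]
  ring

lemma mixture (x y : ℝ) : ∀ (N : ℕ) (g : ℕ → ℝ),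
    2^N * Bb N ((x+y)/2) g
      = ∑ a ∈ Finset.range (N+1), (N.choose a : ℝ) * Q a (N-a) x y g := by
  intro N
  induction N with
  | zero => intro g; simp [Q_zero_left, Bb_zero]
  | succ N ih =>
    intro g
    calc 2^(N+1) * Bb (N+1) ((x+y)/2) g
        = (2-(x+y)) * (2^N * Bb N ((x+y)/2) g)
          + (x+y) * (2^N * Bb N ((x+y)/2) (fun k => g (k+1))) := by
          rw [Bb_succ, pow_succ]
          ring
      _ = (2-(x+y)) * ∑ a ∈ Finset.range (N+1), (N.choose a : ℝ) * Q a (N-a) x y g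
          + (x+y) * ∑ a ∈ Finset.range (N+1), (N.choose a : ℝ) * Q a (N-a) x y (fun k => g (k+1)) := by
          rw [ih g, ih (fun k => g (k+1))]
      _ = (∑ a ∈ Finset.range (N+1), (N.choose a : ℝ) * Q (a+1) (N-a) x y g)
          + ∑ a ∈ Finset.range (N+1), (N.choose a : ℝ) * Q a (N-a+1) x y g := by
          rw [Finset.mul_sum, Finset.mul_sum, ← Finset.sum_add_distrib, ← Finset.sum_add_distrib]
          apply Finset.sum_congr rfl
          intro a ha
          rw [Q_succ_left, Q_succ_right]
          ring
      _ = ∑ a ∈ Finset.range (N+1+1), ((N+1).choose a : ℝ) * Q a (N+1-a) x y g :=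
          (pascal_sum (fun a b => Q a b x y g) N).symm

lemma Q_slice_convex {x y : ℝ} (hx : x ∈ Set.Icc (0:ℝ) 1) (hy : y ∈ Set.Icc (0:ℝ) 1)
    (a b : ℕ) {g : ℕ → ℝ} (hg : ∀ k, 2 * g (k+1) ≤ g k + g (k+2)) :
    2 * Q (a+1) (b+1) x y g ≤ Q (a+2) b x y g + Q a (b+2) x y g := by
  have h := Q_sub2_nonneg hx hy a b hg
  rw [Q_succ2_left, Q_succ2_right, Q_succ_succ]
  nlinarith [h, sq_nonneg (x-y)]

lemma Bb_midpoint_convex {x y : ℝ} (hx : x ∈ Set.Icc (0:ℝ) 1) (hy : y ∈ Set.Icc (0:ℝ) 1)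
    (N : ℕ) (hN : 1 ≤ N) {g : ℕ → ℝ} (hg : ∀ k, 2 * g (k+1) ≤ g k + g (k+2)) :
    2 * Bb N ((x+y)/2) g ≤ Bb N x g + Bb N y g := by
  set D : ℕ → ℝ := fun a => Q a (N-a) x y g with hD
  have hconv : ∀ a, a + 2 ≤ N → 2 * D (a+1) ≤ D a + D (a+2) := by
    intro a ha
    have h := Q_slice_convex hx hy a (N-(a+2)) hg
    have d1 : D (a+1) = Q (a+1) (N-(a+2)+1) x y g := by
      simp only [hD]
      rw [show N-(a+1) = N-(a+2)+1 from by omega]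
    have d0 : D a = Q a (N-(a+2)+2) x y g := by
      simp only [hD]
      rw [show N-a = N-(a+2)+2 from by omega]
    have d2 : D (a+2) = Q (a+2) (N-(a+2)) x y g := by simp only [hD]
    rw [d0, d1, d2]
    linarith [h]
  have hbound := discrete_convex_bound N D hconv
  have hsum : ∑ a ∈ Finset.range (N+1), (N.choose a : ℝ) * ((N:ℝ) * D a)
      ≤ ∑ a ∈ Finset.range (N+1), (N.choose a : ℝ) * (((N:ℝ)-a) * D 0 + a * D N) := by
    apply Finset.sum_le_sum
    intro a ha
    exact mul_le_mul_of_nonneg_left (hbound a (by simp at ha; omega)) (Nat.cast_nonneg _)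
  have hch : ∑ a ∈ Finset.range (N+1), ((N.choose a : ℕ):ℝ) = 2^N := by
    exact_mod_cast congrArg (fun t:ℕ => (t:ℝ)) (Nat.sum_range_choose N)
  have hch2 := sum_mul_choose N hN
  have hmix := mixture x y N g
  have hD0 : D 0 = Bb N y g := by
    simp only [hD]
    rw [Nat.sub_zero, Q_zero_left]
  have hDN : D N = Bb N x g := by
    simp only [hD]
    rw [Nat.sub_self, Q_zero_right]
  have rhs_eq : ∑ a ∈ Finset.range (N+1), (N.choose a : ℝ) * (((N:ℝ)-a) * D 0 + a * D N)
      = D 0 * ((N:ℝ) * 2^N) - D 0 * ((N:ℝ) * 2^(N-1)) + D N * ((N:ℝ) * 2^(N-1)) := by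
    have e : ∀ a ∈ Finset.range (N+1), (N.choose a : ℝ) * (((N:ℝ)-a) * D 0 + a * D N)
        = (D 0 * (N:ℝ)) * ((N.choose a : ℕ):ℝ) - D 0 * ((a:ℝ) * (N.choose a : ℝ))
          + D N * ((a:ℝ) * (N.choose a : ℝ)) := by
      intro a _
      ring
    rw [Finset.sum_congr rfl e, Finset.sum_add_distrib, Finset.sum_sub_distrib,
      ← Finset.mul_sum, ← Finset.mul_sum, ← Finset.mul_sum, hch, hch2]
    ring
  have hpow : (2:ℝ)^N = 2 * 2^(N-1) := by
    rw [← pow_succ']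
    congr 1
    omega
  have lhs_eq : ∑ a ∈ Finset.range (N+1), (N.choose a : ℝ) * ((N:ℝ) * D a)
      = (N:ℝ) * (2^N * Bb N ((x+y)/2) g) := by
    rw [hmix, Finset.mul_sum]
    exact Finset.sum_congr rfl (fun a _ => by ring)
  have hNpos : (0:ℝ) < N := by exact_mod_cast hN
  have hc : (0:ℝ) < (N:ℝ) * 2^(N-1) := by positivity
  have step2 : (N:ℝ) * 2^(N-1) * (2 * Bb N ((x+y)/2) g)
      ≤ (N:ℝ) * 2^(N-1) * (D 0 + D N) := by
    calc (N:ℝ) * 2^(N-1) * (2 * Bb N ((x+y)/2) g)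
        = (N:ℝ) * (2^N * Bb N ((x+y)/2) g) := by rw [hpow]; ring
      _ = ∑ a ∈ Finset.range (N+1), (N.choose a : ℝ) * ((N:ℝ) * D a) := lhs_eq.symm
      _ ≤ _ := hsum
      _ = D 0 * ((N:ℝ) * 2^N) - D 0 * ((N:ℝ) * 2^(N-1)) + D N * ((N:ℝ) * 2^(N-1)) := rhs_eq
      _ = (N:ℝ) * 2^(N-1) * (D 0 + D N) := by rw [hpow]; ring
  have := le_of_mul_le_mul_left step2 hc
  rw [hD0, hDN] at this
  linarith


theorem stmt_5 (n : ℕ) (hn : 1 ≤ n) (f : ℝ → ℝ)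
    (hf_cont : ContinuousOn f (Set.Icc (0 : ℝ) 1))
    (hf_conv : ConvexOn ℝ (Set.Icc (0 : ℝ) 1) f)
    (x y : ℝ) (hx : x ∈ Set.Icc (0 : ℝ) 1) (hy : y ∈ Set.Icc (0 : ℝ) 1) :
    0 ≤ ∑ i ∈ Finset.range (n + 1), ∑ j ∈ Finset.range (n + 1),
        (bp n i x * bp n j x + bp n i y * bp n j y - 2 * bp n i x * bp n j y) *
          f ((i + j : ℝ) / (2 * n)) := by
  have hnR : (1:ℝ) ≤ (n:ℝ) := by exact_mod_cast hn
  have hn' : (0:ℝ) < 2*(n:ℝ) := by linarith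
  set slope := f 1 - f (((2*n-1:ℕ):ℝ)/(2*(n:ℝ))) with hslope
  set g : ℕ → ℝ := fun k => if k ≤ 2*n then f ((k:ℝ)/(2*(n:ℝ)))
    else ((k:ℝ) - 2*(n:ℝ)) * slope + f 1 with hgdef
  have hmem : ∀ k : ℕ, k ≤ 2*n → (k:ℝ)/(2*(n:ℝ)) ∈ Set.Icc (0:ℝ) 1 := by
    intro k hk
    constructor
    · positivity
    · rw [div_le_one hn']
      calc (k:ℝ) ≤ ((2*n:ℕ):ℝ) := by exact_mod_cast hk
        _ = 2*(n:ℝ) := by push_cast; ring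
  have hgval : ∀ k : ℕ, k ≤ 2*n → g k = f ((k:ℝ)/(2*(n:ℝ))) := by
    intro k hk
    simp only [hgdef]
    rw [if_pos hk]
  have hg : ∀ k, 2 * g (k+1) ≤ g k + g (k+2) := by
    intro k
    rcases lt_or_ge (k+2) (2*n+1) with hcase | hcase
    · -- interior: use convexity of f
      have h2 : k+2 ≤ 2*n := by omega
      rw [hgval k (by omega), hgval (k+1) (by omega), hgval (k+2) h2]
      have m0 := hmem k (by omega)
      have m2 := hmem (k+2) h2
      have hcvx := hf_conv.2 m0 m2 (by norm_num : (0:ℝ) ≤ 1/2)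
        (by norm_num : (0:ℝ) ≤ 1/2) (by norm_num : (1/2:ℝ) + 1/2 = 1)
      simp only [smul_eq_mul] at hcvx
      have emid : (1/2:ℝ) * ((k:ℝ)/(2*(n:ℝ))) + (1/2:ℝ) * (((k+2:ℕ):ℝ)/(2*(n:ℝ)))
          = ((k+1:ℕ):ℝ)/(2*(n:ℝ)) := by
        push_cast
        field_simp
        ring
      rw [emid] at hcvx
      linarith
    · rcases lt_or_ge (k+1) (2*n+1) with hcase2 | hcase2
      · -- k+1 = 2n
        have hk1 : k+1 = 2*n := by omega
        have ecast : ((k+1:ℕ):ℝ) = 2*(n:ℝ) := by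
          have := congrArg (fun t:ℕ => (t:ℝ)) hk1
          push_cast at this
          push_cast
          linarith
        have e0 : g k = f ((k:ℝ)/(2*(n:ℝ))) := hgval k (by omega)
        have e1 : g (k+1) = f 1 := by
          rw [hgval (k+1) (by omega), ecast, div_self (ne_of_gt hn')]
        have e2 : g (k+2) = slope + f 1 := by
          simp only [hgdef]
          rw [if_neg (by omega : ¬ (k+2 ≤ 2*n))]
          have e : ((k+2:ℕ):ℝ) - 2*(n:ℝ) = 1 := by
            push_cast at ecast ⊢
            linarith
          rw [e]
          ring
        have eslope : slope = f 1 - f ((k:ℝ)/(2*(n:ℝ))) := by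
          rw [hslope, show (2*n-1 : ℕ) = k from by omega]
        rw [e0, e1, e2, eslope]
        ring_nf
        exact le_refl _
      · rcases lt_or_ge k (2*n+1) with hcase3 | hcase3
        · -- k = 2n
          have hk0 : k = 2*n := by omega
          have ecast : ((k:ℕ):ℝ) = 2*(n:ℝ) := by
            have := congrArg (fun t:ℕ => (t:ℝ)) hk0
            push_cast at this
            linarith
          have e0 : g k = f 1 := by
            rw [hgval k (by omega), ecast, div_self (ne_of_gt hn')]
          have e1 : g (k+1) = slope + f 1 := by
            simp only [hgdef]
            rw [if_neg (by omega : ¬ (k+1 ≤ 2*n))]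
            have e : ((k+1:ℕ):ℝ) - 2*(n:ℝ) = 1 := by push_cast; linarith
            rw [e]
            ring
          have e2 : g (k+2) = 2*slope + f 1 := by
            simp only [hgdef]
            rw [if_neg (by omega : ¬ (k+2 ≤ 2*n))]
            have e : ((k+2:ℕ):ℝ) - 2*(n:ℝ) = 2 := by push_cast; linarith
            rw [e]
          rw [e0, e1, e2]
          linarith
        · -- k > 2n : linear part
          have e0 : g k = ((k:ℝ) - 2*(n:ℝ)) * slope + f 1 := by
            simp only [hgdef]
            rw [if_neg (by omega : ¬ (k ≤ 2*n))]
          have e1 : g (k+1) = (((k+1:ℕ):ℝ) - 2*(n:ℝ)) * slope + f 1 := by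
            simp only [hgdef]
            rw [if_neg (by omega : ¬ (k+1 ≤ 2*n))]
          have e2 : g (k+2) = (((k+2:ℕ):ℝ) - 2*(n:ℝ)) * slope + f 1 := by
            simp only [hgdef]
            rw [if_neg (by omega : ¬ (k+2 ≤ 2*n))]
          rw [e0, e1, e2]
          push_cast
          ring_nf
          exact le_refl _
  -- express the goal via Q
  have hQ : ∀ u v : ℝ, Q n n u v g
      = ∑ i ∈ Finset.range (n+1), ∑ j ∈ Finset.range (n+1),
          bp n i u * (bp n j v * f (((i:ℝ)+(j:ℝ))/(2*(n:ℝ)))) := by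
    intro u v
    unfold Q Bb
    apply Finset.sum_congr rfl
    intro i hi
    rw [Finset.mul_sum]
    apply Finset.sum_congr rfl
    intro j hj
    simp only [Finset.mem_range] at hi hj
    show bp n i u * (bp n j v * g (i+j)) = _
    rw [hgval (i+j) (by omega), show ((i+j:ℕ):ℝ) = (i:ℝ)+(j:ℝ) from by push_cast; ring]
  have goal_eq : (∑ i ∈ Finset.range (n + 1), ∑ j ∈ Finset.range (n + 1),
        (bp n i x * bp n j x + bp n i y * bp n j y - 2 * bp n i x * bp n j y) *
          f ((i + j : ℝ) / (2 * n)))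
      = Q n n x x g + Q n n y y g - 2 * Q n n x y g := by
    rw [hQ x x, hQ y y, hQ x y, Finset.mul_sum, ← Finset.sum_add_distrib,
      ← Finset.sum_sub_distrib]
    apply Finset.sum_congr rfl
    intro i _
    rw [Finset.mul_sum, ← Finset.sum_add_distrib, ← Finset.sum_sub_distrib]
    apply Finset.sum_congr rfl
    intro j _
    ring
  rw [goal_eq]
  have hxx := Q_diag x n n g
  have hyy := Q_diag y n n g
  rw [show n+n = 2*n from by omega] at hxx hyy
  have hBle := Q_le_Bb hx hy n g hg
  have hmid := Bb_midpoint_convex hx hy (2*n) (by omega) hg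
  linarith
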